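/- Let (b, B, m, μ) be an admissible parameter set. For u ∈ K let DR(u) be the bounded linear operator on H with ⟨DR(u)v, x⟩ = ⟨B*(v),x⟩ + ∫ (⟨ξ,v⟩ e^{−⟨ξ,u⟩} − ⟨χ(ξ),v⟩) ‖ξ‖^{−2} ν_x(dξ) for all x ∈ K, v ∈ H, and let D²R(u)(v,w) be the unique element of H with ⟨D²R(u)(v,w), x⟩ = −∫ ⟨ξ,v⟩ ⟨ξ,w⟩ e^{−⟨ξ,u⟩} ‖ξ‖^{−2} ν_x(dξ) for all x ∈ K. Then for all u, v, w ∈ K the one-sided derivatives of R exist and satisfy D₊R(u)(v) = DR(u)v and D₊²R(u)(v,w) = D²R(u)(v,w). -/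

import Mathlib

open MeasureTheory Filter
open scoped RealInnerProductSpace Topology ENNReal

noncomputable section

def IsSelfDualCone {H : Type*} [NormedAddCommGroup H] [InnerProductSpace ℝ H]
    (K : Set H) : Prop :=
  K = {x : H | ∀ y ∈ K, 0 ≤ ⟪x, y⟫}

def trunc {H : Type*} [NormedAddCommGroup H] [InnerProductSpace ℝ H] (ξ : H) : H :=
  if ‖ξ‖ ≤ 1 then ξ else 0

structure AdmissibleParams (H : Type*) [NormedAddCommGroup H] [InnerProductSpace ℝ H]
    [CompleteSpace H] [MeasurableSpace H] [BorelSpace H] (K : Set H) where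
  b : H
  B : H →L[ℝ] H
  m : Measure H
  ν : H → Measure H
  muVec : Set H → H
  m_support : m ((K \ {0})ᶜ) = 0
  m_sq : IntegrableOn (fun ξ : H => ‖ξ‖ ^ 2) (K \ {0}) m
  m_chi : ∀ h : H, IntegrableOn (fun ξ : H => |⟪trunc ξ, h⟫|) (K \ {0}) m
  m_Im : ∃ Im : H, ∀ h : H, ⟪Im, h⟫ = ∫ ξ in K \ {0}, ⟪trunc ξ, h⟫ ∂m
  b_drift : ∀ v ∈ K, 0 ≤ ⟪b, v⟫ - ∫ ξ in K \ {0}, ⟪trunc ξ, v⟫ ∂m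
  ν_finite : ∀ x ∈ K, IsFiniteMeasure (ν x)
  ν_support : ∀ x ∈ K, ν x ((K \ {0})ᶜ) = 0
  ν_add : ∀ x ∈ K, ∀ y ∈ K, ν (x + y) = ν x + ν y
  ν_smul : ∀ x ∈ K, ∀ c : ℝ, 0 ≤ c → ν (c • x) = ENNReal.ofReal c • ν x
  ν_int : ∀ u ∈ K, ∀ x ∈ K, ⟪u, x⟫ = 0 →
    IntegrableOn (fun ξ : H => ⟪trunc ξ, u⟫ / ‖ξ‖ ^ 2) (K \ {0}) (ν x)
  B_quasi : ∀ u ∈ K, ∀ x ∈ K, ⟪u, x⟫ = 0 →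
    0 ≤ ⟪ContinuousLinearMap.adjoint B u, x⟫
      - ∫ ξ in K \ {0}, ⟪trunc ξ, u⟫ / ‖ξ‖ ^ 2 ∂(ν x)
  muVec_mem : ∀ S : Set H, MeasurableSet S → muVec S ∈ K
  muVec_spec : ∀ S : Set H, MeasurableSet S → ∀ x ∈ K, ⟪muVec S, x⟫ = (ν x S).toReal

/-! Pairing with `x ∈ K` turns the difference quotients of `R` and of `DR`, minus their claimed
limits, into integrals against `ν_x` of `-e^{-⟪ξ,u⟫} E_l(⟪ξ,v⟫) / ‖ξ‖²` and
`⟪ξ,v⟫ e^{-⟪ξ,u⟫} E_l(⟪ξ,w⟫) / ‖ξ‖²`, where `E_l(t) = expSlopeError l t`, the error of the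
difference quotient `(1 - e^{-lt}) / l` against its limit `t`, lies between `0` and
`min (t, l t² / 2)` for `t ≥ 0`. The first integrand is `O(l)` uniformly; the second
is `O(l n)` on `{‖ξ‖ ≤ n}` and bounded everywhere.

Self-duality turns such pointwise bounds into norm bounds: `|⟪d, x⟫| ≤ ⟪a, x⟫` on `K` forces
`‖d‖ ≤ ‖a‖`, and taking for `a` a combination of `μ(K∖{0})` and `μ(K∖{0} ∩ {‖ξ‖ > n})` bounds the
error by `l·O(n) + C ‖μ(K∖{0} ∩ {‖ξ‖ > n})‖`. The tail term vanishes as `n → ∞` because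
`‖μ(T)‖² ≤ ν_{μ(S)}(T)` for `T ⊆ S`. -/

namespace IsSelfDualCone

variable {H : Type*} [NormedAddCommGroup H] [InnerProductSpace ℝ H] {K : Set H}

theorem mem_iff (hK : IsSelfDualCone K) {x : H} : x ∈ K ↔ ∀ y ∈ K, 0 ≤ ⟪x, y⟫ :=
  Set.ext_iff.mp hK x

theorem inner_nonneg (hK : IsSelfDualCone K) {x y : H} (hx : x ∈ K) (hy : y ∈ K) :
    0 ≤ ⟪x, y⟫ :=
  hK.mem_iff.mp hx y hy

theorem add_mem (hK : IsSelfDualCone K) {x y : H} (hx : x ∈ K) (hy : y ∈ K) : x + y ∈ K :=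
  hK.mem_iff.mpr fun z hz => by
    rw [inner_add_left]
    exact add_nonneg (hK.inner_nonneg hx hz) (hK.inner_nonneg hy hz)

theorem smul_mem (hK : IsSelfDualCone K) {x : H} (hx : x ∈ K) {c : ℝ} (hc : 0 ≤ c) :
    c • x ∈ K :=
  hK.mem_iff.mpr fun z hz => by
    rw [real_inner_smul_left]
    exact mul_nonneg hc (hK.inner_nonneg hx hz)

theorem isClosed (hK : IsSelfDualCone K) : IsClosed K := by
  rw [hK]
  simp only [Set.ofPred_forall]
  exact isClosed_iInter fun y => isClosed_iInter fun _ =>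
    isClosed_le continuous_const (continuous_id.inner continuous_const)

theorem measurableSet_diff_zero [MeasurableSpace H] [OpensMeasurableSpace H]
    (hK : IsSelfDualCone K) : MeasurableSet (K \ {0}) :=
  hK.isClosed.measurableSet.diff (measurableSet_singleton 0)

theorem norm_le_of_abs_inner_le (hK : IsSelfDualCone K) {a d : H}
    (h : ∀ x ∈ K, |⟪d, x⟫| ≤ ⟪a, x⟫) : ‖d‖ ≤ ‖a‖ := by
  have hsub : a - d ∈ K := hK.mem_iff.mpr fun x hx => by
    rw [inner_sub_left]; linarith [(abs_le.mp (h x hx)).2]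
  have hadd : a + d ∈ K := hK.mem_iff.mpr fun x hx => by
    rw [inner_add_left]; linarith [(abs_le.mp (h x hx)).1]
  have key : ⟪a - d, a + d⟫ = ‖a‖ ^ 2 - ‖d‖ ^ 2 := by
    rw [inner_sub_left, inner_add_right, inner_add_right, real_inner_self_eq_norm_sq,
      real_inner_self_eq_norm_sq, real_inner_comm d a]
    ring
  have := hK.inner_nonneg hsub hadd
  rw [key, sub_nonneg] at this
  exact (pow_le_pow_iff_left₀ (norm_nonneg d) (norm_nonneg a) two_ne_zero).mp this

end IsSelfDualCone

theorem Real.exp_neg_sub_one_add_le {a : ℝ} (ha : 0 ≤ a) : Real.exp (-a) - 1 + a ≤ a ^ 2 / 2 := by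
  let f : ℝ → ℝ := fun b => b ^ 2 / 2 - b + 1 - Real.exp (-b)
  have hf : ∀ b, HasDerivAt f (b - 1 + Real.exp (-b)) b := fun b => by
    have := ((((hasDerivAt_pow 2 b).div_const 2).sub (hasDerivAt_id b)).add_const 1).sub
      (hasDerivAt_neg b).exp
    exact this.congr_deriv (by norm_num)
  have hmono : Monotone f := monotone_of_deriv_nonneg (fun b => (hf b).differentiableAt)
    fun b => by rw [(hf b).deriv]; linarith [Real.add_one_le_exp (-b)]
  have := hmono ha
  simp only [f, ne_eq, OfNat.ofNat_ne_zero, not_false_eq_true, zero_pow, zero_div,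
    zero_add, neg_zero, Real.exp_zero, sub_self] at this
  linarith

def expSlopeError (l t : ℝ) : ℝ := t - (1 - Real.exp (-(l * t))) / l

theorem expSlopeError_nonneg {l : ℝ} (hl : 0 < l) (t : ℝ) : 0 ≤ expSlopeError l t := by
  rw [expSlopeError, sub_nonneg, div_le_iff₀ hl]
  linarith [Real.one_sub_le_exp_neg (l * t)]

theorem expSlopeError_le_self {l t : ℝ} (hl : 0 < l) (ht : 0 ≤ t) : expSlopeError l t ≤ t := by
  have : Real.exp (-(l * t)) ≤ 1 := Real.exp_le_one_iff.mpr (by nlinarith)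
  rw [expSlopeError, sub_le_self_iff]
  exact div_nonneg (by linarith) hl.le

theorem expSlopeError_le {l t : ℝ} (hl : 0 < l) (ht : 0 ≤ t) :
    expSlopeError l t ≤ l * (t ^ 2 / 2) := by
  have := Real.exp_neg_sub_one_add_le (mul_nonneg hl.le ht)
  rw [expSlopeError, sub_le_iff_le_add, ← sub_le_iff_le_add', le_div_iff₀ hl]
  nlinarith

theorem tendsto_nhdsGT_zero_of_norm_le {E : Type*} [SeminormedAddCommGroup E] {f : ℝ → E}
    {a t : ℕ → ℝ} (ht : Tendsto t atTop (𝓝 0))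
    (hf : ∀ l ∈ Set.Ioc (0 : ℝ) 1, ∀ n, ‖f l‖ ≤ l * a n + t n) :
    Tendsto f (𝓝[>] 0) (𝓝 0) := by
  rw [NormedAddGroup.tendsto_nhds_zero]
  intro ε hε
  obtain ⟨n, hn⟩ := (ht.eventually (gt_mem_nhds hε)).exists
  have hlin : Tendsto (fun l : ℝ => l * a n + t n) (𝓝[>] 0) (𝓝 (t n)) := by
    have hcont : Continuous fun l : ℝ => l * a n + t n := by fun_prop
    simpa using (hcont.tendsto 0).mono_left nhdsWithin_le_nhds
  filter_upwards [hlin.eventually (gt_mem_nhds hn), Ioc_mem_nhdsGT one_pos] with l hl hl1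
  exact (hf l hl1 n).trans_lt hl

theorem abs_integral_le_add_indicator {α : Type*} [MeasurableSpace α] {μ : Measure α}
    [IsFiniteMeasure μ] {g : α → ℝ} {T : Set α} (hT : MeasurableSet T) {a c : ℝ}
    (h : ∀ᵐ ξ ∂μ, |g ξ| ≤ a + T.indicator (fun _ => c) ξ) :
    |∫ ξ, g ξ ∂μ| ≤ a * μ.real Set.univ + c * μ.real T := by
  have hint : Integrable (fun ξ => a + T.indicator (fun _ => c) ξ) μ :=
    (integrable_const a).add ((integrable_const c).indicator hT)
  calc |∫ ξ, g ξ ∂μ| ≤ ∫ ξ, (a + T.indicator (fun _ => c) ξ) ∂μ :=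
        norm_integral_le_of_norm_le (f := g) hint h
    _ = a * μ.real Set.univ + c * μ.real T := by
      rw [integral_add (integrable_const a) ((integrable_const c).indicator hT),
        integral_indicator_const c hT, integral_const, smul_eq_mul, smul_eq_mul, mul_comm a,
        mul_comm c]

theorem integral_const_mul_sub_sub {α : Type*} [MeasurableSpace α] {μ : Measure α}
    {f g h : α → ℝ} (hf : Integrable f μ) (hg : Integrable g μ) (hh : Integrable h μ) (c : ℝ) :
    ∫ a, (c * (f a - g a) - h a) ∂μ = c * (∫ a, f a ∂μ - ∫ a, g a ∂μ) - ∫ a, h a ∂μ := by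
  have hfg : Integrable (fun a => c * (f a - g a)) μ := (hf.sub hg).const_mul c
  rw [integral_sub hfg hh, integral_const_mul, integral_sub hf hg]

section Integrands

variable {H : Type*} [NormedAddCommGroup H]

theorem abs_div_norm_sq_le {ξ : H} (hξ : ξ ≠ 0) {r C : ℝ} (h : |r| ≤ C * ‖ξ‖ ^ 2) :
    |r / ‖ξ‖ ^ 2| ≤ C := by
  have hpos : 0 < ‖ξ‖ ^ 2 := by positivity
  rwa [abs_div, abs_of_pos hpos, div_le_iff₀ hpos]

variable [InnerProductSpace ℝ H]

theorem abs_exp_neg_sub_one_add_inner_trunc_le {ξ u : H} (hu : 0 ≤ ⟪ξ, u⟫) :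
    |Real.exp (-⟪ξ, u⟫) - 1 + ⟪trunc ξ, u⟫| ≤ (‖u‖ ^ 2 / 2 + 1) * ‖ξ‖ ^ 2 := by
  have hexp_le : Real.exp (-⟪ξ, u⟫) ≤ 1 := Real.exp_le_one_iff.mpr (neg_nonpos.mpr hu)
  by_cases hξ : ‖ξ‖ ≤ 1
  · have hquad := Real.exp_neg_sub_one_add_le hu
    have hsq : ⟪ξ, u⟫ ^ 2 ≤ (‖ξ‖ * ‖u‖) ^ 2 := pow_le_pow_left₀ hu (real_inner_le_norm ξ u) 2
    rw [trunc, if_pos hξ, abs_of_nonneg (by linarith [Real.one_sub_le_exp_neg ⟪ξ, u⟫])]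
    nlinarith [sq_nonneg ‖ξ‖]
  · rw [trunc, if_neg hξ, inner_zero_left, add_zero, abs_le]
    replace hξ := not_le.mp hξ
    constructor <;> nlinarith [Real.exp_pos (-⟪ξ, u⟫), mul_nonneg (sq_nonneg ‖u‖) (sq_nonneg ‖ξ‖)]

theorem abs_inner_mul_exp_neg_sub_inner_trunc_le {ξ u : H} (hu : 0 ≤ ⟪ξ, u⟫) (v : H) :
    |⟪ξ, v⟫ * Real.exp (-⟪ξ, u⟫) - ⟪trunc ξ, v⟫| ≤ ‖v‖ * (‖u‖ + 1) * ‖ξ‖ ^ 2 := by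
  have hexp_pos := Real.exp_pos (-⟪ξ, u⟫)
  have hexp_le : Real.exp (-⟪ξ, u⟫) ≤ 1 := Real.exp_le_one_iff.mpr (neg_nonpos.mpr hu)
  have hv := abs_real_inner_le_norm ξ v
  by_cases hξ : ‖ξ‖ ≤ 1
  · have hexp_sub : |Real.exp (-⟪ξ, u⟫) - 1| ≤ ‖ξ‖ * ‖u‖ := by
      rw [abs_sub_comm, abs_of_nonneg (by linarith)]
      linarith [Real.one_sub_le_exp_neg ⟪ξ, u⟫, real_inner_le_norm ξ u]
    rw [trunc, if_pos hξ, ← mul_sub_one, abs_mul]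
    calc |⟪ξ, v⟫| * |Real.exp (-⟪ξ, u⟫) - 1| ≤ (‖ξ‖ * ‖v‖) * (‖ξ‖ * ‖u‖) :=
          mul_le_mul hv hexp_sub (abs_nonneg _) (by positivity)
      _ ≤ ‖v‖ * (‖u‖ + 1) * ‖ξ‖ ^ 2 := by nlinarith [norm_nonneg ξ, norm_nonneg v]
  · have hξξ : ‖ξ‖ * ‖v‖ ≤ ‖ξ‖ ^ 2 * ‖v‖ :=
      mul_le_mul_of_nonneg_right (by nlinarith [not_le.mp hξ]) (norm_nonneg v)
    rw [trunc, if_neg hξ, inner_zero_left, sub_zero, abs_mul, abs_of_pos hexp_pos]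
    calc |⟪ξ, v⟫| * Real.exp (-⟪ξ, u⟫) ≤ ‖ξ‖ * ‖v‖ * 1 :=
          mul_le_mul hv hexp_le hexp_pos.le (by positivity)
      _ ≤ ‖v‖ * (‖u‖ + 1) * ‖ξ‖ ^ 2 := by
          nlinarith [mul_nonneg (sq_nonneg ‖ξ‖) (mul_nonneg (norm_nonneg v) (norm_nonneg u))]

theorem abs_inner_mul_inner_mul_exp_neg_le {ξ u : H} (hu : 0 ≤ ⟪ξ, u⟫) (v w : H) :
    |⟪ξ, v⟫ * ⟪ξ, w⟫ * Real.exp (-⟪ξ, u⟫)| ≤ ‖v‖ * ‖w‖ * ‖ξ‖ ^ 2 := by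
  have hexp_pos := Real.exp_pos (-⟪ξ, u⟫)
  have hexp_le : Real.exp (-⟪ξ, u⟫) ≤ 1 := Real.exp_le_one_iff.mpr (neg_nonpos.mpr hu)
  rw [abs_mul, abs_mul, abs_of_pos hexp_pos]
  calc |⟪ξ, v⟫| * |⟪ξ, w⟫| * Real.exp (-⟪ξ, u⟫) ≤ (‖ξ‖ * ‖v‖) * (‖ξ‖ * ‖w‖) * 1 :=
        mul_le_mul (mul_le_mul (abs_real_inner_le_norm ξ v) (abs_real_inner_le_norm ξ w)
          (abs_nonneg _) (by positivity)) hexp_le hexp_pos.le (by positivity)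
    _ = ‖v‖ * ‖w‖ * ‖ξ‖ ^ 2 := by ring

theorem abs_exp_neg_mul_expSlopeError_le {ξ u v : H} (hu : 0 ≤ ⟪ξ, u⟫) (hv : 0 ≤ ⟪ξ, v⟫)
    {l : ℝ} (hl : 0 < l) :
    |Real.exp (-⟪ξ, u⟫) * expSlopeError l ⟪ξ, v⟫| ≤ l * (‖v‖ ^ 2 / 2) * ‖ξ‖ ^ 2 := by
  have hexp_pos := Real.exp_pos (-⟪ξ, u⟫)
  have hexp_le : Real.exp (-⟪ξ, u⟫) ≤ 1 := Real.exp_le_one_iff.mpr (neg_nonpos.mpr hu)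
  have herr := expSlopeError_nonneg hl ⟪ξ, v⟫
  have hsq : ⟪ξ, v⟫ ^ 2 ≤ (‖ξ‖ * ‖v‖) ^ 2 := pow_le_pow_left₀ hv (real_inner_le_norm ξ v) 2
  rw [abs_of_nonneg (mul_nonneg hexp_pos.le herr)]
  calc Real.exp (-⟪ξ, u⟫) * expSlopeError l ⟪ξ, v⟫ ≤ 1 * (l * (⟪ξ, v⟫ ^ 2 / 2)) :=
        mul_le_mul hexp_le (expSlopeError_le hl hv) herr zero_le_one
    _ ≤ l * (‖v‖ ^ 2 / 2) * ‖ξ‖ ^ 2 := by nlinarith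

theorem abs_inner_mul_exp_neg_mul_expSlopeError_le_mul {ξ u v w : H} (hu : 0 ≤ ⟪ξ, u⟫)
    (hv : 0 ≤ ⟪ξ, v⟫) (hw : 0 ≤ ⟪ξ, w⟫) {l : ℝ} (hl : 0 < l) :
    |⟪ξ, v⟫ * Real.exp (-⟪ξ, u⟫) * expSlopeError l ⟪ξ, w⟫| ≤ ‖v‖ * ‖w‖ * ‖ξ‖ ^ 2 := by
  have hexp_pos := Real.exp_pos (-⟪ξ, u⟫)
  have hexp_le : Real.exp (-⟪ξ, u⟫) ≤ 1 := Real.exp_le_one_iff.mpr (neg_nonpos.mpr hu)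
  have herr := expSlopeError_nonneg hl ⟪ξ, w⟫
  rw [abs_of_nonneg (by positivity)]
  calc ⟪ξ, v⟫ * Real.exp (-⟪ξ, u⟫) * expSlopeError l ⟪ξ, w⟫ ≤ (‖ξ‖ * ‖v‖) * 1 * (‖ξ‖ * ‖w‖) :=
        mul_le_mul (mul_le_mul (real_inner_le_norm ξ v) hexp_le hexp_pos.le (by positivity))
          ((expSlopeError_le_self hl hw).trans (real_inner_le_norm ξ w)) herr (by positivity)
    _ = ‖v‖ * ‖w‖ * ‖ξ‖ ^ 2 := by ring

theorem abs_inner_mul_exp_neg_mul_expSlopeError_le_mul_norm {ξ u v w : H} (hu : 0 ≤ ⟪ξ, u⟫)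
    (hv : 0 ≤ ⟪ξ, v⟫) (hw : 0 ≤ ⟪ξ, w⟫) {l : ℝ} (hl : 0 < l) :
    |⟪ξ, v⟫ * Real.exp (-⟪ξ, u⟫) * expSlopeError l ⟪ξ, w⟫|
      ≤ l * (‖v‖ * ‖w‖ ^ 2 * ‖ξ‖ / 2) * ‖ξ‖ ^ 2 := by
  have hexp_pos := Real.exp_pos (-⟪ξ, u⟫)
  have hexp_le : Real.exp (-⟪ξ, u⟫) ≤ 1 := Real.exp_le_one_iff.mpr (neg_nonpos.mpr hu)
  have herr := expSlopeError_nonneg hl ⟪ξ, w⟫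
  have hsq : ⟪ξ, w⟫ ^ 2 ≤ (‖ξ‖ * ‖w‖) ^ 2 := pow_le_pow_left₀ hw (real_inner_le_norm ξ w) 2
  rw [abs_of_nonneg (by positivity)]
  calc ⟪ξ, v⟫ * Real.exp (-⟪ξ, u⟫) * expSlopeError l ⟪ξ, w⟫
        ≤ (‖ξ‖ * ‖v‖) * 1 * (l * ((‖ξ‖ * ‖w‖) ^ 2 / 2)) :=
        mul_le_mul (mul_le_mul (real_inner_le_norm ξ v) hexp_le hexp_pos.le (by positivity))
          ((expSlopeError_le hl hw).trans (by gcongr)) herr (by positivity)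
    _ = l * (‖v‖ * ‖w‖ ^ 2 * ‖ξ‖ / 2) * ‖ξ‖ ^ 2 := by ring

end Integrands

@[fun_prop]
theorem measurable_trunc {H : Type*} [NormedAddCommGroup H] [InnerProductSpace ℝ H]
    [MeasurableSpace H] [OpensMeasurableSpace H] : Measurable (trunc : H → H) := by
  unfold trunc
  exact Measurable.ite (measurableSet_le measurable_norm measurable_const) measurable_id
    measurable_const

namespace AdmissibleParams

variable {H : Type*} [NormedAddCommGroup H] [InnerProductSpace ℝ H] [CompleteSpace H]
  [MeasurableSpace H] [BorelSpace H] {K : Set H}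

theorem norm_muVec_sq_le (hK : IsSelfDualCone K) (p : AdmissibleParams H K) {S T : Set H}
    (hS : MeasurableSet S) (hT : MeasurableSet T) (hTS : T ⊆ S) :
    ‖p.muVec T‖ ^ 2 ≤ (p.ν (p.muVec S) T).toReal := by
  have hdiff : p.muVec S - p.muVec T ∈ K := hK.mem_iff.mpr fun x hx => by
    have := p.ν_finite x hx
    rw [inner_sub_left, p.muVec_spec S hS x hx, p.muVec_spec T hT x hx, sub_nonneg]
    exact ENNReal.toReal_mono (measure_ne_top _ _) (measure_mono hTS)
  have := hK.inner_nonneg (p.muVec_mem T hT) hdiff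
  rw [inner_sub_right, real_inner_self_eq_norm_sq, p.muVec_spec T hT _ (p.muVec_mem S hS)] at this
  linarith

theorem tendsto_norm_muVec_inter_norm_gt (hK : IsSelfDualCone K) (p : AdmissibleParams H K)
    {S : Set H} (hS : MeasurableSet S) :
    Tendsto (fun n : ℕ => ‖p.muVec (S ∩ {ξ | (n : ℝ) < ‖ξ‖})‖) atTop (𝓝 0) := by
  have := p.ν_finite _ (p.muVec_mem S hS)
  have hmeas : ∀ n : ℕ, MeasurableSet (S ∩ {ξ : H | (n : ℝ) < ‖ξ‖}) := fun n =>
    hS.inter (measurableSet_lt measurable_const measurable_norm)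
  have hanti : Antitone fun n : ℕ => S ∩ {ξ : H | (n : ℝ) < ‖ξ‖} := fun m k hmk =>
    Set.inter_subset_inter_right S fun ξ (hξ : (k : ℝ) < ‖ξ‖) =>
      show (m : ℝ) < ‖ξ‖ from (Nat.cast_le.mpr hmk).trans_lt hξ
  have hempty : ⋂ n : ℕ, (S ∩ {ξ : H | (n : ℝ) < ‖ξ‖}) = ∅ :=
    Set.eq_empty_of_forall_notMem fun ξ hξ => by
      obtain ⟨n, hn⟩ := exists_nat_ge ‖ξ‖
      exact (Set.mem_iInter.mp hξ n).2.not_ge hn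
  have hν : Tendsto (fun n : ℕ => (p.ν (p.muVec S) (S ∩ {ξ | (n : ℝ) < ‖ξ‖})).toReal)
      atTop (𝓝 0) := by
    have := tendsto_measure_iInter_atTop (μ := p.ν (p.muVec S))
      (fun n => (hmeas n).nullMeasurableSet) hanti ⟨0, measure_ne_top _ _⟩
    rw [hempty, measure_empty] at this
    exact (ENNReal.tendsto_toReal ENNReal.zero_ne_top).comp this
  have hsq : Tendsto (fun n : ℕ => ‖p.muVec (S ∩ {ξ | (n : ℝ) < ‖ξ‖})‖ ^ 2) atTop (𝓝 0) :=
    squeeze_zero (fun n => sq_nonneg _)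
      (fun n => p.norm_muVec_sq_le hK hS (hmeas n) Set.inter_subset_left) hν
  simpa [Function.comp_def, Real.sqrt_sq (norm_nonneg _)] using
    (Real.continuous_sqrt.tendsto 0).comp hsq

theorem norm_le_of_abs_inner_le_ν (hK : IsSelfDualCone K) (p : AdmissibleParams H K) {d : H}
    {S T : Set H} (hS : MeasurableSet S) (hT : MeasurableSet T) {a c : ℝ} (ha : 0 ≤ a)
    (hc : 0 ≤ c) (h : ∀ x ∈ K, |⟪d, x⟫| ≤ a * (p.ν x S).toReal + c * (p.ν x T).toReal) :
    ‖d‖ ≤ a * ‖p.muVec S‖ + c * ‖p.muVec T‖ :=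
  calc ‖d‖ ≤ ‖a • p.muVec S + c • p.muVec T‖ := hK.norm_le_of_abs_inner_le fun x hx => by
        rw [inner_add_left, real_inner_smul_left, real_inner_smul_left, p.muVec_spec S hS x hx,
          p.muVec_spec T hT x hx]
        exact h x hx
    _ ≤ a * ‖p.muVec S‖ + c * ‖p.muVec T‖ := by
        refine (norm_add_le _ _).trans_eq ?_
        rw [norm_smul, norm_smul, Real.norm_of_nonneg ha, Real.norm_of_nonneg hc]

theorem tendsto_of_inner_sub_eq_integral (hK : IsSelfDualCone K) (p : AdmissibleParams H K)
    {F : ℝ → H} {L : H} {g : ℝ → H → ℝ} {A : ℕ → ℝ} {C : ℝ} (hA : ∀ n, 0 ≤ A n) (hC : 0 ≤ C)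
    (hF : ∀ l ∈ Set.Ioc (0 : ℝ) 1, ∀ x ∈ K, ⟪F l - L, x⟫ = ∫ ξ in K \ {0}, g l ξ ∂(p.ν x))
    (hnear : ∀ l ∈ Set.Ioc (0 : ℝ) 1, ∀ n : ℕ, ∀ ξ ∈ K \ {0}, ‖ξ‖ ≤ n → |g l ξ| ≤ l * A n)
    (hfar : ∀ l ∈ Set.Ioc (0 : ℝ) 1, ∀ ξ ∈ K \ {0}, |g l ξ| ≤ C) :
    Tendsto F (𝓝[>] 0) (𝓝 L) := by
  have hS := hK.measurableSet_diff_zero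
  rw [← tendsto_sub_nhds_zero_iff]
  refine tendsto_nhdsGT_zero_of_norm_le (a := fun n => A n * ‖p.muVec (K \ {0})‖)
    (by simpa using (p.tendsto_norm_muVec_inter_norm_gt hK hS).const_mul C) fun l hl n => ?_
  have hT : MeasurableSet {ξ : H | (n : ℝ) < ‖ξ‖} :=
    measurableSet_lt measurable_const measurable_norm
  have hlA : 0 ≤ l * A n := mul_nonneg hl.1.le (hA n)
  rw [← mul_assoc]
  refine p.norm_le_of_abs_inner_le_ν hK hS (hS.inter hT) hlA hC fun x hx => ?_
  have := p.ν_finite x hx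
  rw [hF l hl x hx]
  have key := abs_integral_le_add_indicator (μ := (p.ν x).restrict (K \ {0})) (g := g l) hT
    (a := l * A n) (c := C) <| by
      filter_upwards [ae_restrict_mem hS] with ξ hξ
      by_cases hn : ‖ξ‖ ≤ n
      · rw [Set.indicator_of_notMem (show ξ ∉ {ξ : H | (n : ℝ) < ‖ξ‖} from not_lt.mpr hn),
          add_zero]
        exact hnear l hl n ξ hξ hn
      · rw [Set.indicator_of_mem (show ξ ∈ {ξ : H | (n : ℝ) < ‖ξ‖} from not_le.mp hn)]
        linarith [hfar l hl ξ hξ]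
  rwa [measureReal_restrict_apply_univ, measureReal_restrict_apply hT, Set.inter_comm] at key

theorem integrableOn_div_norm_sq (hK : IsSelfDualCone K) (p : AdmissibleParams H K) {x : H}
    (hx : x ∈ K) {f : H → ℝ} (hf : Measurable f) {C : ℝ}
    (h : ∀ ξ ∈ K \ {0}, |f ξ| ≤ C * ‖ξ‖ ^ 2) :
    IntegrableOn (fun ξ => f ξ / ‖ξ‖ ^ 2) (K \ {0}) (p.ν x) := by
  have := p.ν_finite x hx
  exact Integrable.of_bound (hf.div (measurable_norm.pow_const 2)).aestronglyMeasurable C <|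
    ae_restrict_of_forall_mem hK.measurableSet_diff_zero fun ξ hξ =>
      abs_div_norm_sq_le hξ.2 (h ξ hξ)

theorem integrableOn_exp_neg_sub_one_add_inner_trunc (hK : IsSelfDualCone K)
    (p : AdmissibleParams H K) {u x : H} (hu : u ∈ K) (hx : x ∈ K) :
    IntegrableOn (fun ξ => (Real.exp (-⟪ξ, u⟫) - 1 + ⟪trunc ξ, u⟫) / ‖ξ‖ ^ 2) (K \ {0})
      (p.ν x) :=
  p.integrableOn_div_norm_sq hK hx (by fun_prop) fun ξ hξ =>
    abs_exp_neg_sub_one_add_inner_trunc_le (hK.inner_nonneg hξ.1 hu)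

theorem integrableOn_inner_mul_exp_neg_sub_inner_trunc (hK : IsSelfDualCone K)
    (p : AdmissibleParams H K) {u x : H} (hu : u ∈ K) (v : H) (hx : x ∈ K) :
    IntegrableOn (fun ξ => (⟪ξ, v⟫ * Real.exp (-⟪ξ, u⟫) - ⟪trunc ξ, v⟫) / ‖ξ‖ ^ 2) (K \ {0})
      (p.ν x) :=
  p.integrableOn_div_norm_sq hK hx (by fun_prop) fun ξ hξ =>
    abs_inner_mul_exp_neg_sub_inner_trunc_le (hK.inner_nonneg hξ.1 hu) v

theorem integrableOn_inner_mul_inner_mul_exp_neg (hK : IsSelfDualCone K)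
    (p : AdmissibleParams H K) {u x : H} (hu : u ∈ K) (v w : H) (hx : x ∈ K) :
    IntegrableOn (fun ξ => ⟪ξ, v⟫ * ⟪ξ, w⟫ * Real.exp (-⟪ξ, u⟫) / ‖ξ‖ ^ 2) (K \ {0}) (p.ν x) :=
  p.integrableOn_div_norm_sq hK hx (by fun_prop) fun ξ hξ =>
    abs_inner_mul_inner_mul_exp_neg_le (hK.inner_nonneg hξ.1 hu) v w

theorem inner_slope_R_sub_DR_eq_integral (hK : IsSelfDualCone K) (p : AdmissibleParams H K)
    {R : H → H} {DR : H → H →L[ℝ] H}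
    (hR : ∀ u ∈ K, ∀ x ∈ K, ⟪R u, x⟫ = ⟪ContinuousLinearMap.adjoint p.B u, x⟫
        - ∫ ξ in K \ {0}, (Real.exp (-⟪ξ, u⟫) - 1 + ⟪trunc ξ, u⟫) / ‖ξ‖ ^ 2 ∂(p.ν x))
    (hDR : ∀ u ∈ K, ∀ v : H, ∀ x ∈ K, ⟪DR u v, x⟫ = ⟪ContinuousLinearMap.adjoint p.B v, x⟫
        + ∫ ξ in K \ {0}, (⟪ξ, v⟫ * Real.exp (-⟪ξ, u⟫) - ⟪trunc ξ, v⟫) / ‖ξ‖ ^ 2 ∂(p.ν x))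
    {u v x : H} (hu : u ∈ K) (hv : v ∈ K) (hx : x ∈ K) {l : ℝ} (hl : 0 < l) :
    ⟪l⁻¹ • (R (u + l • v) - R u) - DR u v, x⟫
      = ∫ ξ in K \ {0}, -(Real.exp (-⟪ξ, u⟫) * expSlopeError l ⟪ξ, v⟫) / ‖ξ‖ ^ 2 ∂(p.ν x) := by
  have hulv : u + l • v ∈ K := hK.add_mem hu (hK.smul_mem hv hl.le)
  rw [inner_sub_left, real_inner_smul_left, inner_sub_left, hR _ hulv x hx, hR u hu x hx,
    hDR u hu v x hx, map_add, map_smul, inner_add_left, real_inner_smul_left,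
    show ∀ a b c d e : ℝ, l⁻¹ * (a + l * b - c - (a - d)) - (b + e) = l⁻¹ * (d - c) - e by
      intros; field_simp; ring,
    ← integral_const_mul_sub_sub (p.integrableOn_exp_neg_sub_one_add_inner_trunc hK hu hx)
      (p.integrableOn_exp_neg_sub_one_add_inner_trunc hK hulv hx)
      (p.integrableOn_inner_mul_exp_neg_sub_inner_trunc hK hu v hx)]
  congr 1
  funext ξ
  rw [expSlopeError, inner_add_right, inner_add_right, real_inner_smul_right,
    real_inner_smul_right, neg_add, Real.exp_add]
  field_simp
  ring

theorem inner_slope_DR_sub_D2R_eq_integral (hK : IsSelfDualCone K) (p : AdmissibleParams H K)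
    {DR : H → H →L[ℝ] H} {D2R : H → H → H → H}
    (hDR : ∀ u ∈ K, ∀ v : H, ∀ x ∈ K, ⟪DR u v, x⟫ = ⟪ContinuousLinearMap.adjoint p.B v, x⟫
        + ∫ ξ in K \ {0}, (⟪ξ, v⟫ * Real.exp (-⟪ξ, u⟫) - ⟪trunc ξ, v⟫) / ‖ξ‖ ^ 2 ∂(p.ν x))
    (hD2R : ∀ u ∈ K, ∀ v w : H, ∀ x ∈ K, ⟪D2R u v w, x⟫ =
      -∫ ξ in K \ {0}, (⟪ξ, v⟫ * ⟪ξ, w⟫ * Real.exp (-⟪ξ, u⟫)) / ‖ξ‖ ^ 2 ∂(p.ν x))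
    {u w x : H} (hu : u ∈ K) (v : H) (hw : w ∈ K) (hx : x ∈ K) {l : ℝ} (hl : 0 < l) :
    ⟪l⁻¹ • (DR (u + l • w) v - DR u v) - D2R u v w, x⟫
      = ∫ ξ in K \ {0}, ⟪ξ, v⟫ * Real.exp (-⟪ξ, u⟫) * expSlopeError l ⟪ξ, w⟫ / ‖ξ‖ ^ 2
          ∂(p.ν x) := by
  have hulw : u + l • w ∈ K := hK.add_mem hu (hK.smul_mem hw hl.le)
  rw [inner_sub_left, real_inner_smul_left, inner_sub_left, hDR _ hulw v x hx, hDR u hu v x hx,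
    hD2R u hu v w x hx, ← integral_neg, add_sub_add_left_eq_sub,
    ← integral_const_mul_sub_sub (p.integrableOn_inner_mul_exp_neg_sub_inner_trunc hK hulw v hx)
      (p.integrableOn_inner_mul_exp_neg_sub_inner_trunc hK hu v hx)
      (p.integrableOn_inner_mul_inner_mul_exp_neg hK hu v w hx).fun_neg]
  congr 1
  funext ξ
  rw [expSlopeError, inner_add_right, real_inner_smul_right, neg_add, Real.exp_add]
  field_simp
  ring

end AdmissibleParams

theorem stmt_13_general {H : Type*} [NormedAddCommGroup H] [InnerProductSpace ℝ H] [CompleteSpace H]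
    [MeasurableSpace H] [BorelSpace H] (K : Set H)
    (hK : IsSelfDualCone K)
    (p : AdmissibleParams H K)
    (R : H → H)
    (hR : ∀ u ∈ K, ∀ x ∈ K, ⟪R u, x⟫ =
      ⟪ContinuousLinearMap.adjoint p.B u, x⟫
        - ∫ ξ in K \ {0}, (Real.exp (-⟪ξ, u⟫) - 1 + ⟪trunc ξ, u⟫) / ‖ξ‖ ^ 2 ∂(p.ν x))
    (DR : H → H →L[ℝ] H)
    (hDR : ∀ u ∈ K, ∀ v : H, ∀ x ∈ K, ⟪DR u v, x⟫ =
      ⟪ContinuousLinearMap.adjoint p.B v, x⟫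
        + ∫ ξ in K \ {0}, (⟪ξ, v⟫ * Real.exp (-⟪ξ, u⟫) - ⟪trunc ξ, v⟫) / ‖ξ‖ ^ 2 ∂(p.ν x))
    (D2R : H → H → H → H)
    (hD2R : ∀ u ∈ K, ∀ v w : H, ∀ x ∈ K, ⟪D2R u v w, x⟫ =
      -∫ ξ in K \ {0}, (⟪ξ, v⟫ * ⟪ξ, w⟫ * Real.exp (-⟪ξ, u⟫)) / ‖ξ‖ ^ 2 ∂(p.ν x)) :
    ∀ u ∈ K, ∀ v ∈ K, ∀ w ∈ K,
      -- first one-sided derivative: `D₊R(u)(v) = DR(u)v`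
      Filter.Tendsto (fun l : ℝ => l⁻¹ • (R (u + l • v) - R u))
        (𝓝[>] 0) (𝓝 (DR u v)) ∧
      -- second one-sided derivative: `D₊²R(u)(v,w) = D²R(u)(v,w)`
      Filter.Tendsto (fun l : ℝ => l⁻¹ • (DR (u + l • w) v - DR u v))
        (𝓝[>] 0) (𝓝 (D2R u v w)) := by
  intro u hu v hv w hw
  have hnonneg {y ξ : H} (hy : y ∈ K) (hξ : ξ ∈ K \ {0}) : 0 ≤ ⟪ξ, y⟫ := hK.inner_nonneg hξ.1 hy
  constructor
  · have hbound (l : ℝ) (hl : l ∈ Set.Ioc (0 : ℝ) 1) (ξ : H) (hξ : ξ ∈ K \ {0}) :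
        |-(Real.exp (-⟪ξ, u⟫) * expSlopeError l ⟪ξ, v⟫) / ‖ξ‖ ^ 2| ≤ l * (‖v‖ ^ 2 / 2) :=
      abs_div_norm_sq_le hξ.2 <| (abs_neg _).trans_le <|
        abs_exp_neg_mul_expSlopeError_le (hnonneg hu hξ) (hnonneg hv hξ) hl.1
    refine p.tendsto_of_inner_sub_eq_integral hK (A := fun _ => ‖v‖ ^ 2 / 2)
      (fun _ => by positivity) (by positivity : 0 ≤ ‖v‖ ^ 2 / 2)
      (fun l hl x hx => p.inner_slope_R_sub_DR_eq_integral hK hR hDR hu hv hx hl.1)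
      (fun l hl _ ξ hξ _ => hbound l hl ξ hξ) fun l hl ξ hξ => ?_
    exact (hbound l hl ξ hξ).trans (mul_le_of_le_one_left (by positivity) hl.2)
  · refine p.tendsto_of_inner_sub_eq_integral hK (A := fun n => ‖v‖ * ‖w‖ ^ 2 * n / 2)
      (fun _ => by positivity) (by positivity : 0 ≤ ‖v‖ * ‖w‖)
      (fun l hl x hx => p.inner_slope_DR_sub_D2R_eq_integral hK hDR hD2R hu v hw hx hl.1)
      (fun l hl n ξ hξ hn => abs_div_norm_sq_le hξ.2 ?_) fun l hl ξ hξ => abs_div_norm_sq_le hξ.2 ?_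
    · exact (abs_inner_mul_exp_neg_mul_expSlopeError_le_mul_norm (hnonneg hu hξ) (hnonneg hv hξ)
        (hnonneg hw hξ) hl.1).trans (by gcongr; exact hl.1.le)
    · exact abs_inner_mul_exp_neg_mul_expSlopeError_le_mul (hnonneg hu hξ) (hnonneg hv hξ)
        (hnonneg hw hξ) hl.1

/-- The one-sided derivatives of `R` exist on `K` and satisfy
`D₊R(u)(v) = DR(u)v` and `D₊²R(u)(v,w) = D²R(u)(v,w)`. -/
theorem stmt_13 {H : Type*} [NormedAddCommGroup H] [InnerProductSpace ℝ H] [CompleteSpace H]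
    [MeasurableSpace H] [BorelSpace H] (K : Set H)
    (hK : IsSelfDualCone K) (hKgen : ∀ z : H, ∃ x ∈ K, ∃ y ∈ K, z = x - y)
    (p : AdmissibleParams H K)
    (R : H → H)
    (hR : ∀ u ∈ K, ∀ x ∈ K, ⟪R u, x⟫ =
      ⟪ContinuousLinearMap.adjoint p.B u, x⟫
        - ∫ ξ in K \ {0}, (Real.exp (-⟪ξ, u⟫) - 1 + ⟪trunc ξ, u⟫) / ‖ξ‖ ^ 2 ∂(p.ν x))
    (DR : H → H →L[ℝ] H)
    (hDR : ∀ u ∈ K, ∀ v : H, ∀ x ∈ K, ⟪DR u v, x⟫ =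
      ⟪ContinuousLinearMap.adjoint p.B v, x⟫
        + ∫ ξ in K \ {0}, (⟪ξ, v⟫ * Real.exp (-⟪ξ, u⟫) - ⟪trunc ξ, v⟫) / ‖ξ‖ ^ 2 ∂(p.ν x))
    (D2R : H → H → H → H)
    (hD2R : ∀ u ∈ K, ∀ v w : H, ∀ x ∈ K, ⟪D2R u v w, x⟫ =
      -∫ ξ in K \ {0}, (⟪ξ, v⟫ * ⟪ξ, w⟫ * Real.exp (-⟪ξ, u⟫)) / ‖ξ‖ ^ 2 ∂(p.ν x)) :
    ∀ u ∈ K, ∀ v ∈ K, ∀ w ∈ K,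
      -- first one-sided derivative: `D₊R(u)(v) = DR(u)v`
      Filter.Tendsto (fun l : ℝ => l⁻¹ • (R (u + l • v) - R u))
        (𝓝[>] 0) (𝓝 (DR u v)) ∧
      -- second one-sided derivative: `D₊²R(u)(v,w) = D²R(u)(v,w)`
      Filter.Tendsto (fun l : ℝ => l⁻¹ • (DR (u + l • w) v - DR u v))
        (𝓝[>] 0) (𝓝 (D2R u v w)) :=
  stmt_13_general K hK p R hR DR hDR D2R hD2R
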